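/- arXiv:1207.1597 — 4 statements merged into one kernel-verified Lean document; each statement's English description precedes it below -/
import Mathlib

section
/- The kernel of the homomorphism φ : H_n → ℤⁿ (sending h to its eventual translation vector) is exactly the group of finitely supported permutations of S = ℕ × {1,…,n}. -/
/-! A map of `ℕ × Fin n` is eventually the zero translation exactly when it fixes every point
beyond some level `N`; since `Fin n` is finite, this says that its support has bounded first
coordinates, i.e. is finite. -/

/-- `h` is eventually the translation given by the integer vector `m`:
for each ray `x`, `h (i, x) = (i + m x, x)` for all `i ≥ z x`. -/
def EvTransW (n : ℕ) (h : ℕ × Fin n → ℕ × Fin n) (m : Fin n → ℤ) : Prop :=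
  ∃ z : Fin n → ℕ, ∀ (x : Fin n) (i : ℕ), z x ≤ i →
    ((h (i, x)).1 : ℤ) = (i : ℤ) + m x ∧ (h (i, x)).2 = x

/-- `h` is eventually a translation. -/
def EvTrans (n : ℕ) (h : ℕ × Fin n → ℕ × Fin n) : Prop :=
  ∃ m : Fin n → ℤ, EvTransW n h m

theorem Set.finite_iff_bddAbove_image_fst {α ι : Type*} [SemilatticeSup α] [Nonempty α]
    [LocallyFiniteOrderBot α] [Finite ι] {s : Set (α × ι)} :
    s.Finite ↔ BddAbove (Prod.fst '' s) := by
  refine ⟨fun hs => (hs.image _).bddAbove, fun ⟨N, hN⟩ => ?_⟩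
  refine ((Set.finite_Iic N).prod Set.finite_univ).subset fun p hp => ?_
  exact ⟨hN ⟨p, hp, rfl⟩, trivial⟩

theorem evTransW_zero_iff {n : ℕ} {f : ℕ × Fin n → ℕ × Fin n} :
    EvTransW n f 0 ↔ ∃ N, ∀ s, N ≤ s.1 → f s = s := by
  constructor
  · rintro ⟨z, hz⟩
    refine ⟨Finset.univ.sup z, fun ⟨i, x⟩ hi => ?_⟩
    obtain ⟨hfst, hsnd⟩ := hz x i ((Finset.le_sup (Finset.mem_univ x)).trans hi)
    exact Prod.ext (by simpa using hfst) hsnd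
  · rintro ⟨N, hN⟩
    exact ⟨fun _ => N, fun x i hi => by simp [hN (i, x) hi]⟩

theorem eventually_fixed_iff_bddAbove {α : Type*} {f : ℕ × α → ℕ × α} :
    (∃ N, ∀ s, N ≤ s.1 → f s = s) ↔ BddAbove (Prod.fst '' {s | f s ≠ s}) := by
  constructor
  · rintro ⟨N, hN⟩
    refine ⟨N, ?_⟩
    rintro _ ⟨s, hs, rfl⟩
    by_contra hlt
    exact hs (hN s (not_le.mp hlt).le)
  · rintro ⟨N, hN⟩
    refine ⟨N + 1, fun s hs => ?_⟩
    by_contra hne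
    exact absurd (hN ⟨s, hne, rfl⟩) (by omega)

theorem stmt_5_general (n : ℕ) (h : Equiv.Perm (ℕ × Fin n)) :
    EvTransW n ⇑h (fun _ => (0 : ℤ)) ↔ {s : ℕ × Fin n | h s ≠ s}.Finite := by
  rw [Set.finite_iff_bddAbove_image_fst, ← eventually_fixed_iff_bddAbove]
  exact evTransW_zero_iff

/-- An element of Houghton's group lies in the kernel of `φ` (i.e. is eventually
the zero translation) if and only if it has finite support. -/
theorem stmt_5 (n : ℕ) (h : Equiv.Perm (ℕ × Fin n)) (hh : EvTrans n ⇑h) :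
    EvTransW n ⇑h (fun _ => (0 : ℤ)) ↔ {s : ℕ × Fin n | h s ≠ s}.Finite :=
  stmt_5_general n h
end

section
/- Every element of finite order in Houghton's group H_n has finite support, i.e., the set of points of S not fixed by the element is finite. -/
namespace EvTransW

variable {n : ℕ} {f : ℕ × Fin n → ℕ × Fin n} {m m' : Fin n → ℤ}

theorem id : EvTransW n id 0 :=
  ⟨0, fun _ _ _ => by simp⟩

-- Raising the thresholds by `|m x|` guarantees that `f` lands above the thresholds of `f^[k]`.
theorem iterate (hf : EvTransW n f m) (k : ℕ) : EvTransW n f^[k] (k • m) := by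
  induction k with
  | zero => simpa using EvTransW.id
  | succ k ih =>
    obtain ⟨z, hz⟩ := hf
    obtain ⟨zk, hzk⟩ := ih
    refine ⟨fun x => max (z x) (zk x + (m x).natAbs), fun x i hi => ?_⟩
    obtain ⟨hfst, hsnd⟩ := hz x i (le_of_max_le_left hi)
    have hf_eq : f (i, x) = ((f (i, x)).1, x) := Prod.ext rfl hsnd
    have hfk : zk x ≤ (f (i, x)).1 := by
      have := le_of_max_le_right hi
      omega
    obtain ⟨hkfst, hksnd⟩ := hzk x _ hfk
    rw [Function.iterate_succ_apply, hf_eq]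
    refine ⟨?_, hksnd⟩
    rw [hkfst, hfst]
    simp only [Pi.smul_apply, nsmul_eq_mul]
    push_cast
    ring

theorem unique (hm : EvTransW n f m) (hm' : EvTransW n f m') : m = m' := by
  obtain ⟨z, hz⟩ := hm
  obtain ⟨z', hz'⟩ := hm'
  funext x
  have h := (hz x _ (le_max_left (z x) (z' x))).1
  rw [(hz' x _ (le_max_right (z x) (z' x))).1] at h
  omega

theorem finite_support_of_zero (hf : EvTransW n f 0) : {s | f s ≠ s}.Finite := by
  obtain ⟨z, hz⟩ := hf
  refine ((Set.finite_Iio (Finset.univ.sup z)).prod Set.finite_univ).subset ?_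
  rintro ⟨i, x⟩ hmoved
  simp only [Set.mem_prod, Set.mem_Iio, Set.mem_univ, and_true]
  by_contra! hi
  obtain ⟨hfst, hsnd⟩ := hz x i ((Finset.le_sup (Finset.mem_univ x)).trans hi)
  exact hmoved (Prod.ext (by simpa using hfst) hsnd)

end EvTransW

/-- Every element of finite order in Houghton's group has finite support. -/
theorem stmt_6 (n : ℕ) (h : Equiv.Perm (ℕ × Fin n)) (hh : EvTrans n ⇑h)
    (hfin : IsOfFinOrder h) :
    {s : ℕ × Fin n | h s ≠ s}.Finite := by
  obtain ⟨m, hm⟩ := hh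
  have hpow : EvTransW n (⇑(h ^ orderOf h)) (orderOf h • m) := by
    rw [Equiv.Perm.coe_pow]
    exact hm.iterate _
  have hkm : orderOf h • m = 0 := by
    rw [pow_orderOf_eq_one] at hpow
    exact hpow.unique EvTransW.id
  rw [smul_eq_zero_iff_right hfin.orderOf_pos.ne'] at hkm
  exact (hkm ▸ hm).finite_support_of_zero
end

section
/- Let G act faithfully on a set X, let H ≤ G, and partition X into classes X₁,…,X_t according to H-conjugacy classes of H-stabilisers. Suppose that for every g ∈ G and every index a there exists g_a ∈ G acting as g on X_a and fixing X ∖ X_a pointwise. Then the centraliser C_G(H) is isomorphic to the direct product C₁ × ⋯ × C_t, where C_a is the subgroup of C_G(H) fixing X ∖ X_a pointwise. -/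
/-- The subgroup of elements of `G` fixing the set `A ⊆ X` pointwise. -/
def fixingSub (G : Type*) {X : Type*} [Group G] [MulAction G X] (A : Set X) :
    Subgroup G where
  carrier := {g : G | ∀ x ∈ A, g • x = x}
  one_mem' := fun x _ => one_smul G x
  mul_mem' := by
    intro a b ha hb x hx
    rw [mul_smul, hb x hx, ha x hx]
  inv_mem' := by
    intro a ha x hx
    exact inv_smul_eq_iff.mpr (ha x hx).symm

/-- The stabiliser of `x` in the subgroup `H`. -/
def stabInH {G X : Type*} [Group G] [MulAction G X] (H : Subgroup G) (x : X) :
    Subgroup H :=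
  MulAction.stabilizer H x

/-- `x ∼ y` iff the stabilisers of `x` and `y` in `H` are `H`-conjugate. -/
def stabConjRel {G X : Type*} [Group G] [MulAction G X] (H : Subgroup G) (x y : X) : Prop :=
  ∃ h : H, stabInH H y = Subgroup.map (MulAut.conj h).toMonoidHom (stabInH H x)

/-!
Elements of `C_G(H)` preserve `H`-stabilisers and `H` conjugates them, so both map every class
`X_a` into itself. Hence the element acting as `g ∈ C_G(H)` on `X_a` and trivially off it (unique
by faithfulness) again centralises `H`, and `g ↦ (g_a)_a` is a homomorphism `C_G(H) → ∏ C_a`,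
injective because the classes cover `X`. Elements of different `C_a` have disjoint supports, hence
commute, and the product of a tuple `(c_a)_a` is a preimage of it.
-/

section Restriction

variable {G X : Type*} [Group G] [MulAction G X]

def IsRestriction (A : Set X) (g r : G) : Prop :=
  (∀ x ∈ A, r • x = g • x) ∧ ∀ x ∉ A, r • x = x

variable {A B : Set X} {g g' r r' c : G}

theorem IsRestriction.mem_fixingSub (h : IsRestriction A g r) : r ∈ fixingSub G Aᶜ := h.2

theorem IsRestriction.eq [FaithfulSMul G X] (h : IsRestriction A g r)
    (h' : IsRestriction A g r') : r = r' :=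
  eq_of_smul_eq_smul (α := X) fun x => by
    by_cases hx : x ∈ A
    · rw [h.1 x hx, h'.1 x hx]
    · rw [h.2 x hx, h'.2 x hx]

theorem IsRestriction.mul (hg' : ∀ x ∈ A, g' • x ∈ A) (h : IsRestriction A g r)
    (h' : IsRestriction A g' r') : IsRestriction A (g * g') (r * r') :=
  ⟨fun x hx => by rw [mul_smul, h'.1 x hx, h.1 _ (hg' x hx), mul_smul],
    fun x hx => by rw [mul_smul, h'.2 x hx, h.2 x hx]⟩

theorem isRestriction_of_mem_fixingSub (hc : c ∈ fixingSub G Aᶜ) : IsRestriction A c c :=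
  ⟨fun _ _ => rfl, hc⟩

theorem isRestriction_one_of_mem_fixingSub (hAB : Disjoint A B) (hc : c ∈ fixingSub G Bᶜ) :
    IsRestriction A c 1 :=
  ⟨fun x hx => by rw [one_smul, hc x (hAB.notMem_of_mem_left hx)], fun x _ => one_smul G x⟩

theorem IsRestriction.mem_centralizer [FaithfulSMul G X] {S : Set G}
    (hS : ∀ s ∈ S, ∀ x, s • x ∈ A ↔ x ∈ A) (hg : g ∈ Subgroup.centralizer S)
    (h : IsRestriction A g r) : r ∈ Subgroup.centralizer S := by
  intro s hs
  refine eq_of_smul_eq_smul (α := X) fun x => ?_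
  simp only [mul_smul]
  by_cases hx : x ∈ A
  · rw [h.1 x hx, h.1 _ ((hS s hs x).2 hx), ← mul_smul, ← mul_smul, hg s hs]
  · rw [h.2 x hx, h.2 _ (mt (hS s hs x).1 hx)]

theorem smul_mem_of_mem_fixingSub_compl (hc : c ∈ fixingSub G Aᶜ) {x : X} (hx : x ∈ A) :
    c • x ∈ A := by
  by_contra hcx
  exact hcx (by rwa [smul_left_cancel c (hc _ hcx)])

theorem commute_of_mem_fixingSub_compl [FaithfulSMul G X] (hAB : Disjoint A B)
    (hg : g ∈ fixingSub G Aᶜ) (hc : c ∈ fixingSub G Bᶜ) : Commute g c := by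
  refine eq_of_smul_eq_smul (α := X) fun x => ?_
  simp only [mul_smul]
  by_cases hxA : x ∈ A
  · rw [hc x (hAB.notMem_of_mem_left hxA),
      hc _ (hAB.notMem_of_mem_left (smul_mem_of_mem_fixingSub_compl hg hxA))]
  by_cases hxB : x ∈ B
  · rw [hg x (hAB.notMem_of_mem_right hxB),
      hg _ (hAB.notMem_of_mem_right (smul_mem_of_mem_fixingSub_compl hc hxB))]
  · rw [hg x hxA, hc x hxB, hg x hxA]

end Restriction

section Stabilizer

variable {G X : Type*} [Group G] [MulAction G X] {H : Subgroup G}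

theorem stabConjRel_smul (h : H) (x : X) : stabConjRel H x (h • x) :=
  ⟨h, MulAction.stabilizer_smul_eq_stabilizer_map_conj h x⟩

theorem stabInH_smul_of_mem_centralizer {c : G} (hc : c ∈ Subgroup.centralizer (H : Set G))
    (x : X) : stabInH H (c • x) = stabInH H x := by
  ext h
  have hhc : (h : G) * c = c * h := hc h h.2
  simp only [stabInH, MulAction.mem_stabilizer_iff, Subgroup.smul_def]
  rw [← mul_smul, hhc, mul_smul, smul_left_cancel_iff]

theorem stabConjRel_smul_of_mem_centralizer {c : G}
    (hc : c ∈ Subgroup.centralizer (H : Set G)) (x : X) : stabConjRel H x (c • x) :=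
  ⟨1, by rw [stabInH_smul_of_mem_centralizer hc, map_one]; exact (Subgroup.map_id _).symm⟩

end Stabilizer

section Partition

variable {G X ι : Type*} [Group G] [MulAction G X] {A : ι → Set X}

theorem disjoint_of_existsUnique_mem (hpart : ∀ x, ∃! i, x ∈ A i) {i j : ι} (hij : i ≠ j) :
    Disjoint (A i) (A j) :=
  Set.disjoint_left.2 fun x hi hj => hij ((hpart x).unique hi hj)

theorem smul_mem_iff_of_stabConjRel {H : Subgroup G} (hpart : ∀ x, ∃! i, x ∈ A i)
    (hclass : ∀ i (x y : X), x ∈ A i → (y ∈ A i ↔ stabConjRel H x y)) {g : G}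
    (hg : ∀ x : X, stabConjRel H x (g • x)) (i : ι) (x : X) : g • x ∈ A i ↔ x ∈ A i := by
  refine ⟨fun hgx => ?_, fun hx => (hclass i x _ hx).2 (hg x)⟩
  obtain ⟨j, hj, -⟩ := hpart x
  rwa [(hpart (g • x)).unique hgx ((hclass j x _ hj).2 (hg x))]

end Partition

section Construction

variable {G X ι : Type*} [Group G] [MulAction G X] [FaithfulSMul G X] {A : ι → Set X}
  {S : Set G} (hS : ∀ s ∈ S, ∀ i x, s • x ∈ A i ↔ x ∈ A i)
  (hC : ∀ c ∈ Subgroup.centralizer S, ∀ i, ∀ x ∈ A i, c • x ∈ A i)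
  (hsplit : ∀ g ∈ Subgroup.centralizer S, ∀ i, ∃ r, IsRestriction (A i) g r)

noncomputable def restrictionHom :
    Subgroup.centralizer S →* ∀ i, (Subgroup.centralizer S ⊓ fixingSub G (A i)ᶜ : Subgroup G) where
  toFun g i := ⟨(hsplit g g.2 i).choose,
    (hsplit g g.2 i).choose_spec.mem_centralizer (fun s hs => hS s hs i) g.2,
    (hsplit g g.2 i).choose_spec.mem_fixingSub⟩
  map_one' := funext fun i => Subtype.ext <|
    (hsplit _ (1 : Subgroup.centralizer S).2 i).choose_spec.eq
      (isRestriction_of_mem_fixingSub (one_mem _))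
  map_mul' g g' := funext fun i => Subtype.ext <|
    (hsplit _ (g * g').2 i).choose_spec.eq <|
      (hsplit g g.2 i).choose_spec.mul (hC g' g'.2 i) (hsplit g' g'.2 i).choose_spec

theorem isRestriction_restrictionHom (g : Subgroup.centralizer S) (i : ι) :
    IsRestriction (A i) (g : G) (restrictionHom hS hC hsplit g i : G) :=
  (hsplit g g.2 i).choose_spec

theorem restrictionHom_injective (hpart : ∀ x, ∃! i, x ∈ A i) :
    Function.Injective (restrictionHom hS hC hsplit) := by
  refine (injective_iff_map_eq_one _).2 fun g hg =>
    Subtype.ext <| eq_of_smul_eq_smul (α := X) fun x => ?_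
  obtain ⟨i, hi, -⟩ := hpart x
  rw [← (isRestriction_restrictionHom hS hC hsplit g i).1 x hi, hg]
  rfl

theorem restrictionHom_mulSingle [DecidableEq ι] (hpart : ∀ x, ∃! i, x ∈ A i) (i : ι)
    (c : (Subgroup.centralizer S ⊓ fixingSub G (A i)ᶜ : Subgroup G)) :
    restrictionHom hS hC hsplit ⟨c, c.2.1⟩ = Pi.mulSingle i c := by
  funext j
  apply Subtype.ext
  refine (isRestriction_restrictionHom hS hC hsplit _ j).eq ?_
  rcases eq_or_ne j i with rfl | hji
  · rw [Pi.mulSingle_eq_same]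
    exact isRestriction_of_mem_fixingSub c.2.2
  · rw [Pi.mulSingle_eq_of_ne hji]
    exact isRestriction_one_of_mem_fixingSub (disjoint_of_existsUnique_mem hpart hji) c.2.2

theorem restrictionHom_surjective [Finite ι] (hpart : ∀ x, ∃! i, x ∈ A i) :
    Function.Surjective (restrictionHom hS hC hsplit) := by
  classical
  have := Fintype.ofFinite ι
  have hcomm : Pairwise fun i j => ∀ x y : G,
      x ∈ Subgroup.centralizer S ⊓ fixingSub G (A i)ᶜ →
      y ∈ Subgroup.centralizer S ⊓ fixingSub G (A j)ᶜ → Commute x y :=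
    fun i j hij x y hx hy =>
      commute_of_mem_fixingSub_compl (disjoint_of_existsUnique_mem hpart hij) hx.2 hy.2
  have hrange : (Subgroup.noncommPiCoprod hcomm).range ≤ Subgroup.centralizer S := by
    rw [Subgroup.noncommPiCoprod_range]
    exact iSup_le fun _ => inf_le_left
  let prod := (Subgroup.noncommPiCoprod hcomm).codRestrict (Subgroup.centralizer S) fun c =>
    hrange (MonoidHom.mem_range.2 ⟨c, rfl⟩)
  have hprod : (restrictionHom hS hC hsplit).comp prod = MonoidHom.id _ :=
    MonoidHom.pi_ext fun i c => by
      simpa [prod] using restrictionHom_mulSingle hS hC hsplit hpart i c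
  exact fun c => ⟨prod c, DFunLike.congr_fun hprod c⟩

noncomputable def centralizerEquivPi [Finite ι] (hpart : ∀ x, ∃! i, x ∈ A i) :
    Subgroup.centralizer S ≃*
      ∀ i, (Subgroup.centralizer S ⊓ fixingSub G (A i)ᶜ : Subgroup G) :=
  MulEquiv.ofBijective (restrictionHom hS hC hsplit)
    ⟨restrictionHom_injective hS hC hsplit hpart, restrictionHom_surjective hS hC hsplit hpart⟩

end Construction

/-- If `G` acts faithfully on `X`, `X` is partitioned into the classes `X₁,…,X_t`
of the relation `∼`, and for every `g ∈ G` and every class there is an element of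
`G` acting as `g` on the class and trivially outside it, then
`C_G(H) ≅ C₁ × ⋯ × C_t`, where `C_a` is the subgroup of `C_G(H)` fixing the
complement of `X_a` pointwise. -/
theorem stmt_8 {G X : Type*} [Group G] [MulAction G X] [FaithfulSMul G X]
    (H : Subgroup G) (t : ℕ) (Xa : Fin t → Set X)
    (hpart : ∀ x : X, ∃! a : Fin t, x ∈ Xa a)
    (hclass : ∀ (a : Fin t) (x y : X), x ∈ Xa a → (y ∈ Xa a ↔ stabConjRel H x y))
    (hsplit : ∀ (g : G) (a : Fin t), ∃ ga : G,
      (∀ x ∈ Xa a, ga • x = g • x) ∧ (∀ x ∉ Xa a, ga • x = x)) :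
    Nonempty ((Subgroup.centralizer (H : Set G)) ≃*
      ∀ a : Fin t, (Subgroup.centralizer (H : Set G) ⊓ fixingSub G ((Xa a)ᶜ) :
        Subgroup G)) := by
  have hH : ∀ h ∈ (H : Set G), ∀ a x, h • x ∈ Xa a ↔ x ∈ Xa a := fun h hh =>
    smul_mem_iff_of_stabConjRel hpart hclass (stabConjRel_smul ⟨h, hh⟩)
  have hC : ∀ c ∈ Subgroup.centralizer (H : Set G), ∀ a, ∀ x ∈ Xa a, c • x ∈ Xa a :=
    fun c hc a x =>
      (smul_mem_iff_of_stabConjRel hpart hclass (stabConjRel_smul_of_mem_centralizer hc) a x).2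
  exact ⟨centralizerEquivPi hH hC (fun g _ a => hsplit g a) hpart⟩
end

section
/- Houghton's group H_n (for n ≥ 2) has infinitely many conjugacy classes of subgroups isomorphic to ℤ/2ℤ; in particular H_n is not quasi-FP̲₀. -/
/-!
The `i`-th witness is the product of the `i + 1` disjoint transpositions `(2k, 0) ↔ (2k + 1, 0)`,
`k ≤ i`, on the first ray. It is a finitary involution, hence lies in `H_n`. Conjugation by any
permutation `h` carries the fixed-point set of `g` onto that of `h g h⁻¹`, so conjugate elements
move equally many points; and a conjugation mapping one subgroup of order two onto another maps
generator to generator. The witnesses move `2, 4, 6, …` points, so no two are conjugate.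
-/

theorem evTrans_of_apply_eq_self_of_le {n : ℕ} {f : ℕ × Fin n → ℕ × Fin n} (N : ℕ)
    (hf : ∀ x i, N ≤ i → f (i, x) = (i, x)) : EvTrans n f :=
  ⟨0, fun _ => N, fun x i hi => by simp [hf x i hi]⟩

theorem eq_of_mem_zpowers_of_orderOf_eq_two {G : Type*} [Group G] {a b : G}
    (hb : orderOf b = 2) (ha : a ∈ Subgroup.zpowers b) (ha1 : a ≠ 1) : a = b := by
  obtain ⟨k, rfl⟩ := Subgroup.mem_zpowers_iff.mp ha
  rw [← zpow_mod_orderOf, hb, Nat.cast_ofNat] at ha1 ⊢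
  rcases Int.emod_two_eq_zero_or_one k with h | h
  · simp [h] at ha1
  · simp [h]

theorem ncard_compl_fixedBy_conj {G α : Type*} [Group G] [MulAction G α] (g h : G) :
    (MulAction.fixedBy α (h * g * h⁻¹))ᶜ.ncard = (MulAction.fixedBy α g)ᶜ.ncard := by
  rw [← MulAction.smul_fixedBy, ← Set.smul_set_compl, Set.ncard_smul_set]

def flipNat (m : ℕ) : ℕ := if m % 2 = 0 then m + 1 else m - 1

theorem flipNat_involutive : Function.Involutive flipNat := by
  intro m; unfold flipNat; split_ifs <;> omega

theorem flipNat_ne (m : ℕ) : flipNat m ≠ m := by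
  unfold flipNat; split_ifs <;> omega

theorem flipNat_lt_two_mul {m N : ℕ} (h : m < 2 * N) : flipNat m < 2 * N := by
  unfold flipNat; split_ifs <;> omega

section FlipRay

variable {ι : Type*} [DecidableEq ι]

def flipRayFun (z : ι) (N : ℕ) (p : ℕ × ι) : ℕ × ι :=
  if p.2 = z ∧ p.1 < 2 * N then (flipNat p.1, z) else p

theorem flipRayFun_involutive (z : ι) (N : ℕ) : Function.Involutive (flipRayFun z N) := by
  rintro ⟨m, x⟩
  by_cases h : x = z ∧ m < 2 * N
  · obtain ⟨rfl, hm⟩ := h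
    simp [flipRayFun, hm, flipNat_lt_two_mul hm, flipNat_involutive m]
  · simp [flipRayFun, h]

def flipRay (z : ι) (N : ℕ) : Equiv.Perm (ℕ × ι) :=
  (flipRayFun_involutive z N).toPerm

theorem flipRay_apply (z : ι) (N : ℕ) (p : ℕ × ι) :
    flipRay z N p = if p.2 = z ∧ p.1 < 2 * N then (flipNat p.1, z) else p :=
  rfl

theorem compl_fixedBy_flipRay (z : ι) (N : ℕ) :
    (MulAction.fixedBy (ℕ × ι) (flipRay z N))ᶜ = (·, z) '' Set.Iio (2 * N) := by
  ext ⟨m, x⟩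
  simp only [Set.mem_compl_iff, MulAction.mem_fixedBy, Equiv.Perm.smul_def, flipRay_apply,
    Set.mem_image, Set.mem_Iio, Prod.mk.injEq]
  by_cases h : x = z ∧ m < 2 * N
  · obtain ⟨rfl, hm⟩ := h
    simp [hm, flipNat_ne]
  · simp only [h, if_false, not_true_eq_false, false_iff, not_exists, not_and]
    rintro k hk rfl rfl
    exact h ⟨rfl, hk⟩

theorem ncard_compl_fixedBy_flipRay (z : ι) (N : ℕ) :
    (MulAction.fixedBy (ℕ × ι) (flipRay z N))ᶜ.ncard = 2 * N := by
  rw [compl_fixedBy_flipRay, Set.ncard_image_of_injective _ (Prod.mk_left_injective z),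
    ← Finset.coe_range, Set.ncard_coe_finset, Finset.card_range]

theorem flipRay_ne_one (z : ι) {N : ℕ} (hN : 0 < N) : flipRay z N ≠ 1 := by
  intro h
  have := ncard_compl_fixedBy_flipRay z N
  simp only [h, MulAction.fixedBy_one_eq_univ, Set.compl_univ, Set.ncard_empty] at this
  omega

theorem orderOf_flipRay (z : ι) {N : ℕ} (hN : 0 < N) : orderOf (flipRay z N) = 2 :=
  orderOf_eq_prime (Equiv.ext (flipRayFun_involutive z N)) (flipRay_ne_one z hN)

theorem flipRay_apply_of_le (z : ι) {N i : ℕ} (hi : 2 * N ≤ i) (x : ι) :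
    flipRay z N (i, x) = (i, x) := by
  simp [flipRay_apply, show ¬ i < 2 * N by omega]

end FlipRay

/-- Houghton's group `H_n` (n ≥ 2) contains an infinite family of order-two
elements generating pairwise non-conjugate subgroups isomorphic to `ℤ/2ℤ`;
in particular `H_n` is not quasi-FP̲₀. -/
theorem stmt_16 (n : ℕ) (hn : 2 ≤ n) :
    ∃ q : ℕ → Equiv.Perm (ℕ × Fin n),
      (∀ i, EvTrans n ⇑(q i)) ∧
      (∀ i, orderOf (q i) = 2) ∧
      (∀ i j : ℕ, i ≠ j →
        ¬ ∃ h : Equiv.Perm (ℕ × Fin n), EvTrans n ⇑h ∧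
          Subgroup.map (MulAut.conj h).toMonoidHom (Subgroup.zpowers (q i)) =
            Subgroup.zpowers (q j)) := by
  let z : Fin n := ⟨0, by omega⟩
  refine ⟨fun i => flipRay z (i + 1),
    fun i => evTrans_of_apply_eq_self_of_le _ fun x _ hi => flipRay_apply_of_le z hi x,
    fun i => orderOf_flipRay z i.succ_pos, ?_⟩
  rintro i j hij ⟨h, -, hmap⟩
  have hconj : h * flipRay z (i + 1) * h⁻¹ = flipRay z (j + 1) := by
    refine eq_of_mem_zpowers_of_orderOf_eq_two (orderOf_flipRay z j.succ_pos) ?_ ?_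
    · rw [← hmap]
      exact Subgroup.mem_map_of_mem _ (Subgroup.mem_zpowers _)
    · rw [Ne, conj_eq_one_iff]
      exact flipRay_ne_one z i.succ_pos
  have hcard := ncard_compl_fixedBy_conj (α := ℕ × Fin n) (flipRay z (i + 1)) h
  rw [hconj, ncard_compl_fixedBy_flipRay, ncard_compl_fixedBy_flipRay] at hcard
  omega
end
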